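/- Let λ ≠ 0 be real, p ≠ 0 real, n ≥ 1, h > 0 with |ph| < π. Define ω̄ = -iλp and ω_m = -i ∑_{j=0}^{m} (2^j λ/(3^j h)) sin(ph) sin^{2j}(ph/2). Then |ω_{n+1} - ω̄| < |ω_n - ω̄|; that is, for the pure transport equation, increasing the number of mass-lumping corrections strictly decreases the distance between the numerical Fourier symbol and the exact symbol. -/

import Mathlib

open Finset in
/-- Fourier symbol of the `m`-th corrected mass-lumped scheme for pure transport. -/
noncomputable def omegaTransport (lam p h : ℝ) (m : ℕ) : ℂ :=
  -Complex.I * ((∑ j ∈ range (m+1),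
      (2:ℝ)^j * lam / (3^j * h) * Real.sin (p*h) * Real.sin (p*h/2) ^ (2*j) : ℝ) : ℂ)

/-!
Put `x = p h` and `t = (2/3) sin² (x/2) ∈ (0, 1)`. Then `ω_m - ω̄ = -i (λ/h) (sin x ∑_{j ≤ m} tʲ - x)`.
For `0 < x < π` the partial sums increase strictly and stay below `x`, because
`sin x / (1 - t) = 3 sin x / (2 + cos x) ≤ x` is the Cusa–Huygens inequality; so the error
`x - sin x ∑_{j ≤ m} tʲ` is positive and strictly decreasing in `m`. The case `x < 0` follows by oddness.
-/

open Finset Real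

lemma mul_cos_le_sin {x : ℝ} (hx₀ : 0 ≤ x) (hx : x ≤ π) : x * cos x ≤ sin x := by
  rcases lt_or_ge x (π / 2) with hlt | hge
  · have hcos : 0 < cos x := cos_pos_of_mem_Ioo ⟨by linarith [pi_pos], hlt⟩
    have htan := le_tan hx₀ hlt
    rw [tan_eq_sin_div_cos, le_div_iff₀ hcos] at htan
    exact htan
  · have hcos : cos x ≤ 0 := cos_nonpos_of_pi_div_two_le_of_le hge (by linarith [pi_pos])
    nlinarith [sin_nonneg_of_nonneg_of_le_pi hx₀ hx]

/-- The Cusa–Huygens inequality. -/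
lemma three_mul_sin_le_mul_two_add_cos {x : ℝ} (hx : 0 ≤ x) :
    3 * sin x ≤ x * (2 + cos x) := by
  rcases le_or_gt x π with hπ | hπ
  · let f : ℝ → ℝ := fun y => y * (2 + cos y) - 3 * sin y
    have hderiv (y : ℝ) : HasDerivAt f (2 - 2 * cos y - y * sin y) y := by
      refine (((hasDerivAt_id' y).mul ((hasDerivAt_cos y).const_add 2)).sub
        ((hasDerivAt_sin y).const_mul 3)).congr_deriv ?_
      ring
    -- `2 - 2 cos y - y sin y = 4 sin (y/2) (sin (y/2) - (y/2) cos (y/2))`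
    have hderiv_nonneg : ∀ y ∈ interior (Set.Icc 0 π), 0 ≤ 2 - 2 * cos y - y * sin y := by
      intro y hy
      rw [interior_Icc] at hy
      have hhalf := mul_cos_le_sin (x := y / 2) (by linarith [hy.1]) (by linarith [hy.2, pi_pos])
      have hsin := sin_nonneg_of_nonneg_of_le_pi (x := y / 2) (by linarith [hy.1])
        (by linarith [hy.2, pi_pos])
      have hy2 : y = 2 * (y / 2) := by ring
      rw [hy2, sin_two_mul, cos_two_mul_eq_one_sub]
      nlinarith
    have hmono : MonotoneOn f (Set.Icc 0 π) :=
      monotoneOn_of_hasDerivWithinAt_nonneg (convex_Icc 0 π)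
        (fun y _ => (hderiv y).continuousAt.continuousWithinAt)
        (fun y _ => (hderiv y).hasDerivWithinAt) hderiv_nonneg
    have := hmono ⟨le_rfl, pi_pos.le⟩ ⟨hx, hπ⟩ hx
    simp only [f, zero_mul, sin_zero, mul_zero, sub_zero] at this
    linarith
  · nlinarith [sin_le_one x, neg_one_le_cos x, pi_gt_three]

/-- The symbol of the `m`-th corrected scheme in the variable `x = p h`, scaled by `h / lam`. -/
noncomputable def correctedSymbol (x : ℝ) (m : ℕ) : ℝ :=
  sin x * ∑ j ∈ range (m + 1), (2 / 3 * sin (x / 2) ^ 2) ^ j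

lemma omegaTransport_eq (lam p h : ℝ) (m : ℕ) :
    omegaTransport lam p h m = -Complex.I * ((lam / h * correctedSymbol (p * h) m : ℝ) : ℂ) := by
  unfold omegaTransport correctedSymbol
  congr 3
  rw [mul_sum, mul_sum]
  refine sum_congr rfl fun j _ => ?_
  rw [mul_pow, div_pow, pow_mul]
  ring

lemma norm_omegaTransport_sub {lam p h : ℝ} (hh : h ≠ 0) (m : ℕ) :
    ‖omegaTransport lam p h m - -Complex.I * ((lam * p : ℝ) : ℂ)‖
      = |lam / h| * |correctedSymbol (p * h) m - p * h| := by
  have hlamp : lam * p = lam / h * (p * h) := by field_simp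
  rw [omegaTransport_eq, hlamp, ← mul_sub, ← Complex.ofReal_sub, ← mul_sub, norm_mul, norm_neg,
    Complex.norm_I, one_mul, Complex.norm_real, Real.norm_eq_abs, abs_mul]

lemma correctedSymbol_neg (x : ℝ) (m : ℕ) : correctedSymbol (-x) m = -correctedSymbol x m := by
  simp only [correctedSymbol, sin_neg, neg_div, neg_sq, neg_mul]

lemma correctedSymbol_lt_succ {x : ℝ} (hx₀ : 0 < x) (hx : x < π) (m : ℕ) : correctedSymbol x m < correctedSymbol x (m + 1) := by
  have hsin := sin_pos_of_pos_of_lt_pi hx₀ hx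
  have hsin_half := sin_pos_of_pos_of_lt_pi (half_pos hx₀) (by linarith)
  rw [correctedSymbol, correctedSymbol, sum_range_succ _ (m + 1), mul_add, lt_add_iff_pos_right]
  positivity

lemma correctedSymbol_lt_self {x : ℝ} (hx₀ : 0 < x) (hx : x < π) (m : ℕ) : correctedSymbol x m < x := by
  set t := 2 / 3 * sin (x / 2) ^ 2 with ht
  have hsin := sin_pos_of_pos_of_lt_pi hx₀ hx
  have hsin_half := sin_pos_of_pos_of_lt_pi (half_pos hx₀) (by linarith)
  have ht_pos : 0 < t := by positivity
  have ht_lt_one : t < 1 := by nlinarith [sin_sq_le_one (x / 2)]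
  have hcusa : sin x ≤ (1 - t) * x := by
    have hcos := cos_two_mul_eq_one_sub (x / 2)
    rw [show 2 * (x / 2) = x by ring] at hcos
    nlinarith [three_mul_sin_le_mul_two_add_cos hx₀.le]
  have hgeom : (1 - t) * correctedSymbol x m = sin x * (1 - t ^ (m + 1)) := by
    rw [correctedSymbol, mul_left_comm, mul_neg_geom_sum]
  refine lt_of_mul_lt_mul_left ?_ (sub_pos.2 ht_lt_one).le
  rw [hgeom]
  nlinarith [pow_pos ht_pos (m + 1)]

lemma abs_correctedSymbol_succ_sub_lt {x : ℝ} (hx₀ : x ≠ 0) (hx : |x| < π) (m : ℕ) :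
    |correctedSymbol x (m + 1) - x| < |correctedSymbol x m - x| := by
  wlog hpos : 0 < x generalizing x
  · have := this (neg_ne_zero.2 hx₀) (by rwa [abs_neg]) (neg_pos.2 ((not_lt.1 hpos).lt_of_ne hx₀))
    rwa [correctedSymbol_neg, correctedSymbol_neg, ← neg_add', ← neg_add', abs_neg, abs_neg,
      ← sub_eq_add_neg, ← sub_eq_add_neg] at this
  rw [abs_of_pos hpos] at hx
  have hsucc := correctedSymbol_lt_succ hpos hx m
  have hlt := correctedSymbol_lt_self hpos hx (m + 1)
  rw [abs_of_neg (by linarith), abs_of_neg (by linarith)]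
  linarith

theorem stmt_8_general (lam p h : ℝ) (n : ℕ) (hlam : lam ≠ 0) (hp : p ≠ 0)
    (hh : 0 < h) (hz : |p*h| < Real.pi) :
    ‖omegaTransport lam p h (n+1) - (-Complex.I * ((lam * p : ℝ) : ℂ))‖
      < ‖omegaTransport lam p h n - (-Complex.I * ((lam * p : ℝ) : ℂ))‖ := by
  rw [norm_omegaTransport_sub hh.ne', norm_omegaTransport_sub hh.ne']
  exact mul_lt_mul_of_pos_left
    (abs_correctedSymbol_succ_sub_lt (mul_ne_zero hp hh.ne') hz n)
    (abs_pos.2 (div_ne_zero hlam hh.ne'))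

theorem stmt_8 (lam p h : ℝ) (n : ℕ) (hlam : lam ≠ 0) (hp : p ≠ 0) (hn : 1 ≤ n)
    (hh : 0 < h) (hz : |p*h| < Real.pi) :
    ‖omegaTransport lam p h (n+1) - (-Complex.I * ((lam * p : ℝ) : ℂ))‖
      < ‖omegaTransport lam p h n - (-Complex.I * ((lam * p : ℝ) : ℂ))‖ :=
  stmt_8_general lam p h n hlam hp hh hz
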